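/- There exists an absolute constant C_a > 0, not depending on the subordinator X, such that for every t > 0, δ > 0, and x > 0, P(N(t,δ) ≥ x) ≤ exp(2C_a t / U(δ) − x/8). -/

import Mathlib

open MeasureTheory ProbabilityTheory Filter Topology Real Set

/-- A subordinator: a non-decreasing right-continuous Lévy process started at 0,
with drift `d`, Lévy measure `ν` and Laplace exponent
`Φ(λ) = dλ + ∫ (1 - e^{-λy}) ν(dy)`. -/
structure IsSubordinator {Ω : Type*} [MeasurableSpace Ω] (P : Measure Ω)
    (X : ℝ → Ω → ℝ) (d : ℝ) (ν : Measure ℝ) : Prop where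
  isProb : IsProbabilityMeasure P
  meas : ∀ t : ℝ, Measurable (X t)
  start : ∀ ω, X 0 ω = 0
  mono : ∀ ω, Monotone fun t => X t ω
  rightCont : ∀ ω t, ContinuousWithinAt (fun s => X s ω) (Set.Ici t) t
  drift_nonneg : 0 ≤ d
  levy_integrable : ∫⁻ y in Set.Ioi (0:ℝ), ENNReal.ofReal (min 1 y) ∂ν ≠ ⊤
  laplace : ∀ l : ℝ, 0 < l → ∀ t : ℝ, 0 ≤ t →
      ∫ ω, Real.exp (-l * X t ω) ∂P
        = Real.exp (-t * (d * l + ∫ y in Set.Ioi (0:ℝ), (1 - Real.exp (-l * y)) ∂ν))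
  indep_incr : ∀ t : ℕ → ℝ, Monotone t → 0 ≤ t 0 →
      iIndepFun (fun i ω => X (t (i+1)) ω - X (t i) ω) P
  stat_incr : ∀ s t : ℝ, 0 ≤ s → 0 ≤ t →
      IdentDistrib (fun ω => X (s + t) ω - X s ω) (X t) P P

/-- The successive passage times `T_n(δ)`: `T_0 = 0` and
`T_{n+1} = inf {t ≥ T_n : X_t - X_{T_n} > δ}`. -/
noncomputable def passage {Ω : Type*} (X : ℝ → Ω → ℝ) (δ : ℝ) : ℕ → Ω → ℝ
  | 0 => fun _ => 0
  | n + 1 => fun ω =>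
      sInf {t : ℝ | passage X δ n ω ≤ t ∧ δ < X t ω - X (passage X δ n ω) ω}

/-- `N(t,δ)`: the minimal number of intervals of length at most `δ` needed to
cover the range `{X_s : s ≤ t}`, realised through the passage times. -/
noncomputable def coverN {Ω : Type*} (X : ℝ → Ω → ℝ) (t δ : ℝ) (ω : Ω) : ℕ :=
  sSup {k : ℕ | passage X δ k ω ≤ t}

/-- The potential function `U(δ) = ∫₀^∞ P(X_t ≤ δ) dt`. -/
noncomputable def potU {Ω : Type*} [MeasurableSpace Ω] (P : Measure Ω)
    (X : ℝ → Ω → ℝ) (δ : ℝ) : ℝ :=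
  ∫ t in Set.Ioi (0:ℝ), (P {ω | X t ω ≤ δ}).toReal

/-- The `q`-potential `U_q(δ) = ∫₀^∞ e^{-qt} P(X_t ≤ δ) dt`. -/
noncomputable def potUq {Ω : Type*} [MeasurableSpace Ω] (P : Measure Ω)
    (X : ℝ → Ω → ℝ) (q δ : ℝ) : ℝ :=
  ∫ t in Set.Ioi (0:ℝ), Real.exp (-q * t) * (P {ω | X t ω ≤ δ}).toReal

/-!
Instead of the strong Markov property at the passage times, discretize. The path rises by at
least `δ` across each passage interval `[T_i, T_{i+1}]`, so on any uniform grid of `[0, t]` finer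
than the gaps between the first `N(t, δ)` passage times, the `δ`-capped grid increments sum to at
least `N(t, δ) δ / 2`. These capped increments are i.i.d. copies of `min X_h δ`, and convexity
gives `E exp (min X_h δ / (4δ)) ≤ 1 + κ (1 - e^{-h Φ(1/δ)})` with
`κ = (e^{1/4} - 1) / (1 - e^{-1})` (`cappedMgfSlope`); Chernoff's bound at level `x δ / 2` then
gives `exp (κ t Φ(1/δ) - x / 8)` uniformly in the grid.
Finally `U(δ) ≤ e / Φ(1/δ)` and `κ e ≤ 2`, so `C_a = 1` works.
-/

noncomputable def cappedMgfSlope : ℝ := (exp (1 / 4) - 1) / (1 - exp (-1))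

lemma exp_mul_le_one_add_mul (c : ℝ) {w : ℝ} (hw₀ : 0 ≤ w) (hw₁ : w ≤ 1) :
    exp (w * c) ≤ 1 + (exp c - 1) * w := by
  have := convexOn_exp.2 (mem_univ 0) (mem_univ c) (sub_nonneg.2 hw₁) hw₀ (by ring)
  simp only [smul_eq_mul, mul_zero, zero_add, exp_zero, mul_one] at this
  linarith

lemma neg_mul_nonpos {a b : ℝ} (ha : 0 ≤ a) (hb : 0 ≤ b) : -a * b ≤ 0 := by
  rw [neg_mul]; exact neg_nonpos.2 (mul_nonneg ha hb)

lemma one_sub_exp_neg_one_pos : 0 < 1 - exp (-1) := by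
  linarith [exp_lt_one_iff.2 (by norm_num : (-1 : ℝ) < 0)]

lemma cappedMgfSlope_nonneg : 0 ≤ cappedMgfSlope :=
  div_nonneg (by linarith [one_le_exp (by norm_num : (0 : ℝ) ≤ 1 / 4)])
    one_sub_exp_neg_one_pos.le

lemma cappedMgfSlope_mul_exp_one_le : cappedMgfSlope * exp 1 ≤ 2 := by
  have he : exp 1 < 2.7182818286 := exp_one_lt_d9
  have he' : 2.7182818283 < exp 1 := exp_one_gt_d9
  have hq : exp (1 / 4) ≤ 4 / 3 := by
    have := exp_bound_div_one_sub_of_interval (by norm_num : (0 : ℝ) ≤ 1 / 4) (by norm_num)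
    norm_num at this ⊢; linarith
  have hinv : exp (-1) ≤ 0.368 := by
    rw [exp_neg, inv_le_comm₀ (exp_pos 1) (by norm_num)]; linarith
  rw [cappedMgfSlope, div_mul_eq_mul_div, div_le_iff₀ one_sub_exp_neg_one_pos]
  nlinarith

/-- Compare both sides through `w = min (v / δ) 1 ∈ [0, 1]`: convexity of `exp` on the left,
concavity of `1 - exp (-w)` on the right. -/
lemma exp_min_le_one_add_cappedMgfSlope_mul {v δ : ℝ} (hv : 0 ≤ v) (hδ : 0 < δ) :
    exp ((4 * δ)⁻¹ * min v δ) ≤ 1 + cappedMgfSlope * (1 - exp (-δ⁻¹ * v)) := by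
  set w := min (δ⁻¹ * v) 1
  have hw₀ : 0 ≤ w := le_min (by positivity) zero_le_one
  have hw₁ : w ≤ 1 := min_le_right _ _
  have hlhs : (4 * δ)⁻¹ * min v δ = w * (1 / 4) := by
    rw [mul_inv, mul_assoc, mul_min_of_nonneg _ _ (inv_nonneg.2 hδ.le),
      inv_mul_cancel₀ hδ.ne']
    ring
  have hw : (1 - exp (-1)) * w ≤ 1 - exp (-δ⁻¹ * v) := by
    have hexp := exp_mul_le_one_add_mul (-1) hw₀ hw₁
    have hmono : exp (-δ⁻¹ * v) ≤ exp (w * -1) :=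
      exp_le_exp.2 (by linarith [min_le_left (δ⁻¹ * v) 1])
    linarith
  have hκ : exp (1 / 4) - 1 = cappedMgfSlope * (1 - exp (-1)) := by
    rw [cappedMgfSlope, div_mul_cancel₀ _ one_sub_exp_neg_one_pos.ne']
  calc exp ((4 * δ)⁻¹ * min v δ) ≤ 1 + (exp (1 / 4) - 1) * w := by
        rw [hlhs]; exact exp_mul_le_one_add_mul _ hw₀ hw₁
    _ = 1 + cappedMgfSlope * ((1 - exp (-1)) * w) := by rw [hκ]; ring
    _ ≤ 1 + cappedMgfSlope * (1 - exp (-δ⁻¹ * v)) := by gcongr; exact cappedMgfSlope_nonneg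

lemma min_add_le_min_add_min {a b c : ℝ} (ha : 0 ≤ a) (hb : 0 ≤ b) (hc : 0 ≤ c) :
    min (a + b) c ≤ min a c + min b c := by
  rcases le_total a c with h₁ | h₁ <;> rcases le_total b c with h₂ | h₂ <;>
    simp only [min_eq_left, min_eq_right, h₁, h₂] <;>
    linarith [min_le_left (a + b) c, min_le_right (a + b) c]

noncomputable def cappedIncrementSum (f : ℝ → ℝ) (h δ : ℝ) (m : ℕ) : ℝ :=
  ∑ j ∈ Finset.range m, min (f ((j + 1 : ℕ) * h) - f (j * h)) δ

section Discretization

variable {f : ℝ → ℝ} {h δ : ℝ}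

lemma le_sum_Ico_min_sub (hf : Monotone f) (hδ : 0 ≤ δ) (hh : 0 ≤ h) {l r : ℕ} {a b : ℝ}
    (hlr : l ≤ r) (hl : l * h ≤ a) (hr : b ≤ r * h) (hab : f a + δ ≤ f b) :
    δ ≤ ∑ j ∈ Finset.Ico l r, min (f ((j + 1 : ℕ) * h) - f (j * h)) δ := by
  have hinc : ∀ j : ℕ, 0 ≤ f ((j + 1 : ℕ) * h) - f (j * h) := fun j =>
    sub_nonneg.2 (hf (mul_le_mul_of_nonneg_right (by norm_cast; omega) hh))
  calc δ = min (f (r * h) - f (l * h)) δ := by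
        rw [min_eq_right]; linarith [hf hl, hf hr]
    _ = min (∑ j ∈ Finset.Ico l r, (f ((j + 1 : ℕ) * h) - f (j * h))) δ := by
        rw [Finset.sum_Ico_sub (fun j : ℕ => f (j * h)) hlr]
    _ ≤ _ := Finset.le_sum_of_subadditive_on_pred (fun v => min v δ) (0 ≤ ·)
        (min_le_left _ _) (fun _ _ ha hb => min_add_le_min_add_min ha hb hδ)
        (fun _ _ => add_nonneg) _ (fun j _ => hinc j)

lemma sum_sum_Ico_le_sum_range {F : ℕ → ℝ} (hF : ∀ j, 0 ≤ F j) {l r : ℕ → ℕ}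
    {m : ℕ} (A : Finset ℕ) (hrm : ∀ i ∈ A, r i ≤ m)
    (hsep : ∀ i ∈ A, ∀ i' ∈ A, i < i' → r i ≤ l i') :
    ∑ i ∈ A, ∑ j ∈ Finset.Ico (l i) (r i), F j ≤ ∑ j ∈ Finset.range m, F j := by
  have hdisj : (A : Set ℕ).PairwiseDisjoint fun i => Finset.Ico (l i) (r i) := by
    intro i hi i' hi' hne
    rcases lt_or_gt_of_ne hne with hlt | hlt
    · exact Finset.disjoint_left.2 fun j hj hj' => by
        have := hsep i hi i' hi' hlt; simp only [Finset.mem_Ico] at hj hj'; omega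
    · exact Finset.disjoint_left.2 fun j hj hj' => by
        have := hsep i' hi' i hi hlt; simp only [Finset.mem_Ico] at hj hj'; omega
  rw [← Finset.sum_biUnion hdisj]
  refine Finset.sum_le_sum_of_subset_of_nonneg (fun j hj => ?_) (fun j _ _ => hF j)
  obtain ⟨i, hi, hj⟩ := Finset.mem_biUnion.1 hj
  exact Finset.mem_range.2 ((Finset.mem_Ico.1 hj).2.trans_le (hrm i hi))

/-- Intervals two indices apart are disjoint, so splitting by parity covers each cell at most
twice. -/
lemma sum_sum_Ico_le_two_mul {F : ℕ → ℝ} (hF : ∀ j, 0 ≤ F j) {l r : ℕ → ℕ}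
    {k m : ℕ} (hrm : ∀ i < k, r i ≤ m)
    (hsep : ∀ i i', i + 2 ≤ i' → i' < k → r i ≤ l i') :
    ∑ i ∈ Finset.range k, ∑ j ∈ Finset.Ico (l i) (r i), F j
      ≤ 2 * ∑ j ∈ Finset.range m, F j := by
  have hhalf : ∀ p : ℕ → Prop, [DecidablePred p] →
      (∀ i i', p i → p i' → i < i' → i + 2 ≤ i') →
      ∑ i ∈ Finset.range k with p i, ∑ j ∈ Finset.Ico (l i) (r i), F j
        ≤ ∑ j ∈ Finset.range m, F j := by
    intro p _ hp
    refine sum_sum_Ico_le_sum_range hF _ (fun i hi => ?_) (fun i hi i' hi' hlt => ?_)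
    · simp only [Finset.mem_filter, Finset.mem_range] at hi; exact hrm i hi.1
    · simp only [Finset.mem_filter, Finset.mem_range] at hi hi'
      exact hsep i i' (hp i i' hi.2 hi'.2 hlt) hi'.1
  rw [← Finset.sum_filter_add_sum_filter_not _ (fun i => Even i), two_mul]
  refine add_le_add (hhalf _ fun i i' hi hi' hlt => ?_) (hhalf _ fun i i' hi hi' hlt => ?_)
  · obtain ⟨a, rfl⟩ := hi; obtain ⟨b, rfl⟩ := hi'; omega
  · rw [Nat.not_even_iff_odd] at hi hi'
    obtain ⟨a, rfl⟩ := hi; obtain ⟨b, rfl⟩ := hi'; omega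

lemma le_two_mul_cappedIncrementSum (hf : Monotone f) (hδ : 0 ≤ δ) (hh : 0 < h)
    {T : ℕ → ℝ} (hT : Monotone T) (hT₀ : 0 ≤ T 0) {k m : ℕ}
    (hstep : ∀ i < k, T i + h ≤ T (i + 1))
    (hrise : ∀ i < k, f (T i) + δ ≤ f (T (i + 1))) (hTk : T k ≤ m * h) :
    k * δ ≤ 2 * cappedIncrementSum f h δ m := by
  have hTnn : ∀ i, 0 ≤ T i / h := fun i => div_nonneg (hT₀.trans (hT (Nat.zero_le i))) hh.le
  set l : ℕ → ℕ := fun i => ⌊T i / h⌋₊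
  set r : ℕ → ℕ := fun i => ⌈T (i + 1) / h⌉₊
  have hl : ∀ i, l i * h ≤ T i := fun i => (le_div_iff₀ hh).1 (Nat.floor_le (hTnn i))
  have hr : ∀ i, T (i + 1) ≤ r i * h := fun i => (div_le_iff₀ hh).1 (Nat.le_ceil _)
  have hlr : ∀ i, l i ≤ r i := fun i =>
    (Nat.floor_le_floor (div_le_div_of_nonneg_right (hT (Nat.le_succ i)) hh.le)).trans
      (Nat.floor_le_ceil _)
  have hrm : ∀ i < k, r i ≤ m := fun i hi =>
    Nat.ceil_le.2 ((div_le_iff₀ hh).2 ((hT (Nat.succ_le_of_lt hi)).trans hTk))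
  have hsep : ∀ i i', i + 2 ≤ i' → i' < k → r i ≤ l i' := by
    intro i i' hii' hi'
    have hgrid : T (i + 1) / h + 1 ≤ T i' / h := by
      rw [div_add_one hh.ne']
      exact div_le_div_of_nonneg_right
        ((hstep (i + 1) (by omega)).trans (hT (by omega))) hh.le
    calc r i ≤ ⌊T (i + 1) / h⌋₊ + 1 := Nat.ceil_le_floor_add_one _
      _ = ⌊T (i + 1) / h + 1⌋₊ := (Nat.floor_add_one (hTnn _)).symm
      _ ≤ l i' := Nat.floor_le_floor hgrid
  calc (k : ℝ) * δ = ∑ _i ∈ Finset.range k, δ := by simp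
    _ ≤ ∑ i ∈ Finset.range k, ∑ j ∈ Finset.Ico (l i) (r i),
          min (f ((j + 1 : ℕ) * h) - f (j * h)) δ :=
        Finset.sum_le_sum fun i hi => le_sum_Ico_min_sub hf hδ hh.le (hlr i) (hl i) (hr i)
          (hrise i (Finset.mem_range.1 hi))
    _ ≤ 2 * cappedIncrementSum f h δ m :=
        sum_sum_Ico_le_two_mul (fun j => le_min (sub_nonneg.2 (hf (by gcongr; norm_num))) hδ)
          hrm hsep

end Discretization

section Passage

variable {Ω : Type*} {X : ℝ → Ω → ℝ} {δ : ℝ} {ω : Ω} {i : ℕ}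

def passageSet (X : ℝ → Ω → ℝ) (δ : ℝ) (n : ℕ) (ω : Ω) : Set ℝ :=
  {s | passage X δ n ω ≤ s ∧ δ < X s ω - X (passage X δ n ω) ω}

lemma passage_succ (n : ℕ) : passage X δ (n + 1) ω = sInf (passageSet X δ n ω) := rfl

/-- `sInf ∅ = 0` in `ℝ`: once a passage set is empty, the passage times restart from `0`. -/
lemma passage_add_of_eq_zero {p : ℕ} (hp : passage X δ p ω = 0) (j : ℕ) :
    passage X δ (p + j) ω = passage X δ j ω := by
  induction j with
  | zero => exact hp
  | succ j ih => rw [← add_assoc, passage_succ, passage_succ, passageSet, passageSet, ih]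

lemma passage_mul_of_eq_zero {p : ℕ} (hp : passage X δ p ω = 0) (n : ℕ) :
    passage X δ (n * p) ω = 0 := by
  induction n with
  | zero => rw [zero_mul]; rfl
  | succ n ih => rw [Nat.succ_mul, add_comm, passage_add_of_eq_zero hp, ih]

lemma passageSet_nonempty {t : ℝ} (ht : 0 ≤ t) (hbdd : BddAbove {k | passage X δ k ω ≤ t})
    (i : ℕ) : (passageSet X δ i ω).Nonempty := by
  by_contra hempty
  have hzero : passage X δ (i + 1) ω = 0 := by
    rw [passage_succ, not_nonempty_iff_eq_empty.1 hempty, Real.sInf_empty]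
  obtain ⟨b, hb⟩ := hbdd
  have hmem : (b + 1) * (i + 1) ≤ b := hb <| show passage X δ _ ω ≤ t by
    rw [passage_mul_of_eq_zero hzero]; exact ht
  nlinarith

lemma passage_le_passage_succ (hne : (passageSet X δ i ω).Nonempty) :
    passage X δ i ω ≤ passage X δ (i + 1) ω :=
  le_csInf hne fun _ hs => hs.1

/-- By right-continuity, the path has already risen by `δ` at the passage time itself. -/
lemma add_le_passage_succ (hmono : Monotone fun s => X s ω)
    (hrc : ∀ s, ContinuousWithinAt (fun s => X s ω) (Ici s) s)
    (hne : (passageSet X δ i ω).Nonempty) :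
    X (passage X δ i ω) ω + δ ≤ X (passage X δ (i + 1) ω) ω := by
  have hright : ∀ s > passage X δ (i + 1) ω, X (passage X δ i ω) ω + δ ≤ X s ω := by
    intro s hs
    obtain ⟨a, ha, has⟩ := exists_lt_of_csInf_lt hne hs
    linarith [ha.2, hmono has.le]
  exact ge_of_tendsto ((hrc _).mono_left (nhdsWithin_mono _ Ioi_subset_Ici_self))
    (eventually_nhdsWithin_of_forall hright)

lemma eventually_coverN_mul_le_two_mul_cappedIncrementSum {t : ℝ} (ht : 0 < t) (hδ : 0 < δ)
    (hmono : Monotone fun s => X s ω)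
    (hrc : ∀ s, ContinuousWithinAt (fun s => X s ω) (Ici s) s) (hN : 0 < coverN X t δ ω) :
    ∀ᶠ m : ℕ in atTop, (coverN X t δ ω : ℝ) * δ
      ≤ 2 * cappedIncrementSum (fun s => X s ω) (t / m) δ m := by
  set T : ℕ → ℝ := fun k => passage X δ k ω
  have hbdd : BddAbove {k | T k ≤ t} := by
    by_contra h; exact hN.ne' (Nat.sSup_of_not_bddAbove h)
  have hk : T (coverN X t δ ω) ≤ t := Nat.sSup_mem ⟨0, ht.le⟩ hbdd
  have hne := passageSet_nonempty ht.le hbdd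
  have hT : Monotone T := monotone_nat_of_le_succ fun i => passage_le_passage_succ (hne i)
  have hrise : ∀ i, X (T i) ω + δ ≤ X (T (i + 1)) ω :=
    fun i => add_le_passage_succ hmono hrc (hne i)
  have hlt : ∀ i, T i < T (i + 1) := fun i =>
    lt_of_not_ge fun hle => by linarith [hrise i, hmono hle]
  have hfine : ∀ i ∈ Finset.range (coverN X t δ ω),
      ∀ᶠ m : ℕ in atTop, T i + t / m ≤ T (i + 1) :=
    fun i _ => (tendsto_const_div_atTop_nhds_zero_nat t).eventually
      (eventually_le_nhds (sub_pos.2 (hlt i))) |>.mono fun m hm => by linarith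
  filter_upwards [(Finset.eventually_all _).2 hfine, eventually_gt_atTop 0] with m hm hm₀
  refine le_two_mul_cappedIncrementSum hmono hδ.le (by positivity) hT le_rfl
    (fun i hi => hm i (Finset.mem_range.2 hi)) (fun i _ => hrise i) ?_
  rwa [mul_div_cancel₀ _ (Nat.cast_ne_zero.2 hm₀.ne')]

end Passage

lemma measure_setOf_eventually_mem_le {α : Type*} [MeasurableSpace α] {μ : Measure α}
    {E : ℕ → Set α} {b : ENNReal} (hE : ∀ᶠ m in atTop, μ (E m) ≤ b) :
    μ {a | ∀ᶠ m in atTop, a ∈ E m} ≤ b := by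
  obtain ⟨M, hM⟩ := eventually_atTop.1 hE
  have hunion : {a | ∀ᶠ m in atTop, a ∈ E m} = ⋃ N, ⋂ m ≥ N, E m := by
    ext a; simp [eventually_atTop]
  have hmono : Monotone fun N => ⋂ m ≥ N, E m := fun _ _ hN _ ha =>
    mem_iInter₂.2 fun m hm => mem_iInter₂.1 ha m (hN.trans hm)
  rw [hunion, hmono.measure_iUnion]
  exact iSup_le fun N => (measure_mono (biInter_subset_of_mem (le_max_left N M))).trans
    (hM _ (le_max_right N M))

section RandomVariable

variable {Ω : Type*} [MeasurableSpace Ω] {P : Measure Ω} {V : Ω → ℝ} {δ : ℝ}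

lemma integrable_exp_of_le [IsFiniteMeasure P] {Z : Ω → ℝ} (hZ : Measurable Z) {C : ℝ}
    (hC : ∀ ω, Z ω ≤ C) : Integrable (fun ω => exp (Z ω)) P :=
  .of_bound hZ.exp.aestronglyMeasurable (exp C) <| ae_of_all _ fun ω => by
    rw [norm_of_nonneg (exp_pos _).le]; exact exp_le_exp.2 (hC ω)

variable [IsProbabilityMeasure P]

lemma integrable_exp_neg_mul (hV : Measurable V) (hV₀ : ∀ ω, 0 ≤ V ω) (hδ : 0 < δ) :
    Integrable (fun ω => exp (-δ⁻¹ * V ω)) P :=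
  integrable_exp_of_le (C := 0) (by fun_prop)
    fun ω => neg_mul_nonpos (inv_nonneg.2 hδ.le) (hV₀ ω)

lemma mgf_min_le (hV : Measurable V) (hV₀ : ∀ ω, 0 ≤ V ω) (hδ : 0 < δ) :
    mgf (fun ω => min (V ω) δ) P (4 * δ)⁻¹
      ≤ 1 + cappedMgfSlope * (1 - ∫ ω, exp (-δ⁻¹ * V ω) ∂P) := by
  have hint := integrable_exp_neg_mul (P := P) hV hV₀ hδ
  calc mgf (fun ω => min (V ω) δ) P (4 * δ)⁻¹
      ≤ ∫ ω, (1 + cappedMgfSlope * (1 - exp (-δ⁻¹ * V ω))) ∂P :=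
        integral_mono
          (integrable_exp_of_le (by fun_prop) fun ω => mul_le_mul_of_nonneg_left
            (min_le_right _ _) (by positivity))
          ((integrable_const _).add (((integrable_const _).sub hint).const_mul _))
          fun ω => exp_min_le_one_add_cappedMgfSlope_mul (hV₀ ω) hδ
    _ = 1 + cappedMgfSlope * (1 - ∫ ω, exp (-δ⁻¹ * V ω) ∂P) := by
        simp_rw [show ∀ y : ℝ, 1 + cappedMgfSlope * (1 - y)
            = (1 + cappedMgfSlope) - cappedMgfSlope * y by intro; ring]
        rw [integral_sub (integrable_const _) (hint.const_mul _), integral_const_mul]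
        simp

lemma measureReal_le_le_exp_one_mul_integral (hV : Measurable V) (hV₀ : ∀ ω, 0 ≤ V ω)
    (hδ : 0 < δ) : P.real {ω | V ω ≤ δ} ≤ exp 1 * ∫ ω, exp (-δ⁻¹ * V ω) ∂P := by
  rw [← integral_indicator_one (measurableSet_le hV measurable_const), ← integral_const_mul]
  refine integral_mono ((integrable_const 1).indicator (measurableSet_le hV measurable_const))
    ((integrable_exp_neg_mul hV hV₀ hδ).const_mul _) fun ω => ?_
  by_cases hω : V ω ≤ δ
  · rw [indicator_of_mem (show ω ∈ {ω | V ω ≤ δ} from hω), Pi.one_apply, ← exp_add]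
    refine one_le_exp ?_
    have : δ⁻¹ * V ω ≤ 1 := by rw [inv_mul_le_one₀ hδ]; exact hω
    linarith
  · rw [indicator_of_notMem (show ω ∉ {ω | V ω ≤ δ} from hω)]
    positivity

lemma integral_exp_neg_mul_sub_le_measureReal (hV : Measurable V) (hV₀ : ∀ ω, 0 ≤ V ω)
    (hδ : 0 < δ) :
    ∫ ω, exp (-δ⁻¹ * V ω) ∂P - exp (-1) ≤ P.real {ω | V ω ≤ δ} := by
  have hint := integrable_exp_neg_mul (P := P) hV hV₀ hδ
  rw [← integral_indicator_one (measurableSet_le hV measurable_const)]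
  calc ∫ ω, exp (-δ⁻¹ * V ω) ∂P - exp (-1)
      = ∫ ω, (exp (-δ⁻¹ * V ω) - exp (-1)) ∂P := by
        rw [integral_sub hint (integrable_const _)]; simp
    _ ≤ _ := by
      refine integral_mono (hint.sub (integrable_const _))
        ((integrable_const 1).indicator (measurableSet_le hV measurable_const)) fun ω => ?_
      by_cases hω : V ω ≤ δ
      · rw [indicator_of_mem (show ω ∈ {ω | V ω ≤ δ} from hω), Pi.one_apply]
        have : exp (-δ⁻¹ * V ω) ≤ 1 :=
          exp_le_one_iff.2 (neg_mul_nonpos (inv_nonneg.2 hδ.le) (hV₀ ω))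
        linarith [exp_pos (-1)]
      · rw [indicator_of_notMem (show ω ∉ {ω | V ω ≤ δ} from hω), sub_nonpos]
        refine exp_le_exp.2 ?_
        have : 1 ≤ δ⁻¹ * V ω := by rw [le_inv_mul_iff₀ hδ]; linarith [not_le.1 hω]
        linarith

end RandomVariable

noncomputable def laplaceExponent (d : ℝ) (ν : Measure ℝ) (l : ℝ) : ℝ :=
  d * l + ∫ y in Ioi (0 : ℝ), (1 - exp (-l * y)) ∂ν

lemma laplaceExponent_nonneg {d l : ℝ} (ν : Measure ℝ) (hd : 0 ≤ d) (hl : 0 ≤ l) :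
    0 ≤ laplaceExponent d ν l :=
  add_nonneg (mul_nonneg hd hl) <| setIntegral_nonneg measurableSet_Ioi fun _ hy =>
    sub_nonneg.2 (exp_le_one_iff.2 (neg_mul_nonpos hl (le_of_lt hy)))

namespace IsSubordinator

variable {Ω : Type*} [MeasurableSpace Ω] {P : Measure Ω} {X : ℝ → Ω → ℝ} {d : ℝ}
  {ν : Measure ℝ} {δ s : ℝ}

lemma nonneg (hX : IsSubordinator P X d ν) (hs : 0 ≤ s) (ω : Ω) : 0 ≤ X s ω :=
  hX.start ω ▸ hX.mono ω hs

lemma integral_exp_neg_mul (hX : IsSubordinator P X d ν) {l : ℝ} (hl : 0 < l) (hs : 0 ≤ s) :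
    ∫ ω, exp (-l * X s ω) ∂P = exp (-s * laplaceExponent d ν l) :=
  hX.laplace l hl s hs

lemma measureReal_le_le (hX : IsSubordinator P X d ν) (hδ : 0 < δ) (hs : 0 ≤ s) :
    P.real {ω | X s ω ≤ δ} ≤ exp 1 * exp (-s * laplaceExponent d ν δ⁻¹) := by
  have := hX.isProb
  rw [← hX.integral_exp_neg_mul (inv_pos.2 hδ) hs]
  exact measureReal_le_le_exp_one_mul_integral (hX.meas s) (hX.nonneg hs) hδ

lemma exp_sub_le_measureReal_le (hX : IsSubordinator P X d ν) (hδ : 0 < δ) (hs : 0 ≤ s) :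
    exp (-s * laplaceExponent d ν δ⁻¹) - exp (-1) ≤ P.real {ω | X s ω ≤ δ} := by
  have := hX.isProb
  rw [← hX.integral_exp_neg_mul (inv_pos.2 hδ) hs]
  exact integral_exp_neg_mul_sub_le_measureReal (hX.meas s) (hX.nonneg hs) hδ

lemma antitone_measureReal_le (hX : IsSubordinator P X d ν) :
    Antitone fun s => P.real {ω | X s ω ≤ δ} := by
  have := hX.isProb
  exact fun s s' hss' => measureReal_mono fun ω hω => (hX.mono ω hss').trans hω

lemma integrableOn_measureReal_le (hX : IsSubordinator P X d ν) (hδ : 0 < δ)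
    (hΦ : 0 < laplaceExponent d ν δ⁻¹) :
    IntegrableOn (fun s => P.real {ω | X s ω ≤ δ}) (Ioi 0) := by
  refine ((exp_neg_integrableOn_Ioi 0 hΦ).const_mul (exp 1)).mono'
    hX.antitone_measureReal_le.measurable.aestronglyMeasurable ?_
  refine (ae_restrict_iff' measurableSet_Ioi).2 (ae_of_all _ fun s hs => ?_)
  rw [norm_of_nonneg measureReal_nonneg]
  exact (hX.measureReal_le_le hδ (le_of_lt hs)).trans_eq (by ring_nf)

/-- The upper half of Bertoin's comparison `U(δ) ≍ 1 / Φ(1/δ)`. -/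
lemma potU_le (hX : IsSubordinator P X d ν) (hδ : 0 < δ)
    (hΦ : 0 < laplaceExponent d ν δ⁻¹) :
    potU P X δ ≤ exp 1 / laplaceExponent d ν δ⁻¹ := by
  calc potU P X δ ≤ ∫ s in Ioi (0 : ℝ), exp 1 * exp (-laplaceExponent d ν δ⁻¹ * s) :=
        setIntegral_mono_on (hX.integrableOn_measureReal_le hδ hΦ)
          ((exp_neg_integrableOn_Ioi 0 hΦ).const_mul _) measurableSet_Ioi fun s hs => by
          exact (hX.measureReal_le_le hδ (le_of_lt hs)).trans_eq (by ring_nf)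
    _ = exp 1 / laplaceExponent d ν δ⁻¹ := by
        rw [integral_const_mul, integral_exp_mul_Ioi (neg_lt_zero.2 hΦ)]; simp [div_eq_mul_inv]

lemma potU_pos (hX : IsSubordinator P X d ν) (hδ : 0 < δ)
    (hΦ : 0 < laplaceExponent d ν δ⁻¹) :
    0 < potU P X δ := by
  set Φ := laplaceExponent d ν δ⁻¹
  set s₀ := (2 * Φ)⁻¹
  have hs₀ : 0 < s₀ := by positivity
  have hp₀ : exp (-1 / 2) - exp (-1) ≤ P.real {ω | X s₀ ω ≤ δ} := by
    have := hX.exp_sub_le_measureReal_le hδ hs₀.le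
    rwa [show -s₀ * Φ = -1 / 2 by simp only [s₀]; field_simp] at this
  have hgap : 0 < exp (-1 / 2) - exp (-1) := sub_pos.2 (exp_lt_exp.2 (by norm_num))
  calc 0 < s₀ * (exp (-1 / 2) - exp (-1)) := by positivity
    _ = ∫ _ in Ioc 0 s₀, (exp (-1 / 2) - exp (-1)) := by simp [hs₀.le]
    _ ≤ ∫ s in Ioc 0 s₀, P.real {ω | X s ω ≤ δ} :=
        setIntegral_mono_on (integrableOn_const (by simp))
          ((hX.integrableOn_measureReal_le hδ hΦ).mono_set Ioc_subset_Ioi_self)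
          measurableSet_Ioc fun s hs => hp₀.trans (hX.antitone_measureReal_le hs.2)
    _ ≤ potU P X δ :=
        setIntegral_mono_set (hX.integrableOn_measureReal_le hδ hΦ)
          (ae_of_all _ fun _ => measureReal_nonneg) Ioc_subset_Ioi_self.eventuallyLE

lemma cappedMgfSlope_mul_laplaceExponent_le (hX : IsSubordinator P X d ν) (hδ : 0 < δ) :
    cappedMgfSlope * laplaceExponent d ν δ⁻¹ ≤ 2 / potU P X δ := by
  rcases (laplaceExponent_nonneg ν hX.drift_nonneg (inv_nonneg.2 hδ.le)).eq_or_lt with hΦ | hΦ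
  · rw [← hΦ, mul_zero]
    exact div_nonneg zero_le_two
      (setIntegral_nonneg measurableSet_Ioi fun _ _ => ENNReal.toReal_nonneg)
  · rw [le_div_iff₀ (hX.potU_pos hδ hΦ)]
    set Φ := laplaceExponent d ν δ⁻¹
    calc cappedMgfSlope * Φ * potU P X δ ≤ cappedMgfSlope * Φ * (exp 1 / Φ) := by
          gcongr
          · exact mul_nonneg cappedMgfSlope_nonneg hΦ.le
          · exact hX.potU_le hδ hΦ
      _ = cappedMgfSlope * exp 1 := by field_simp
      _ ≤ 2 := cappedMgfSlope_mul_exp_one_le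

end IsSubordinator

namespace IsSubordinator

variable {Ω : Type*} [MeasurableSpace Ω] {P : Measure Ω} {X : ℝ → Ω → ℝ} {d : ℝ}
  {ν : Measure ℝ} {δ h : ℝ}

lemma mgf_cappedIncrementSum_le (hX : IsSubordinator P X d ν) (hδ : 0 < δ) (hh : 0 < h)
    (m : ℕ) :
    mgf (fun ω => cappedIncrementSum (fun s => X s ω) h δ m) P (4 * δ)⁻¹
      ≤ exp (cappedMgfSlope * (m * h) * laplaceExponent d ν δ⁻¹) := by
  have := hX.isProb
  have hXmeas := hX.meas
  set Φ := laplaceExponent d ν δ⁻¹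
  set Y : ℕ → Ω → ℝ := fun j ω => min (X ((j + 1 : ℕ) * h) ω - X (j * h) ω) δ
  have hsum : (fun ω => cappedIncrementSum (fun s => X s ω) h δ m)
      = ∑ j ∈ Finset.range m, Y j := by
    ext ω; simp [cappedIncrementSum, Y]
  have hindep : iIndepFun Y P :=
    (hX.indep_incr (fun j : ℕ => (j : ℝ) * h)
      (fun _ _ hab => mul_le_mul_of_nonneg_right (Nat.cast_le.2 hab) hh.le) (by simp)).comp
      (fun _ v => min v δ) fun _ => by fun_prop
  have hident : ∀ j : ℕ, IdentDistrib (Y j) (fun ω => min (X h ω) δ) P P := fun j => by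
    have hY : Y j = fun ω => min (X (j * h + h) ω - X (j * h) ω) δ := by
      ext ω; simp only [Y]; push_cast; ring_nf
    rw [hY]
    exact (hX.stat_incr (j * h) h (by positivity) hh.le).comp
      (measurable_id.min measurable_const)
  have hcell :
      mgf (fun ω => min (X h ω) δ) P (4 * δ)⁻¹ ≤ exp (cappedMgfSlope * (h * Φ)) := by
    have hmgf := mgf_min_le (P := P) (hX.meas h) (hX.nonneg hh.le) hδ
    rw [hX.integral_exp_neg_mul (inv_pos.2 hδ) hh.le] at hmgf
    refine hmgf.trans ((add_comm _ _).trans_le (add_one_le_exp _) |>.trans (exp_le_exp.2 ?_))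
    exact mul_le_mul_of_nonneg_left (by linarith [add_one_le_exp (-h * Φ)]) cappedMgfSlope_nonneg
  rw [hsum, hindep.mgf_sum (fun j => by fun_prop), Finset.prod_congr rfl
    fun j _ => congrFun (mgf_congr_identDistrib (hident j)) _, Finset.prod_const,
    Finset.card_range]
  calc mgf (fun ω => min (X h ω) δ) P (4 * δ)⁻¹ ^ m
      ≤ exp (cappedMgfSlope * (h * Φ)) ^ m :=
        pow_le_pow_left₀ mgf_nonneg hcell m
    _ = exp (cappedMgfSlope * (m * h) * Φ) := by rw [← exp_nat_mul]; ring_nf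

lemma measureReal_le_cappedIncrementSum_le (hX : IsSubordinator P X d ν) (hδ : 0 < δ)
    (hh : 0 < h) (m : ℕ) (a : ℝ) :
    P.real {ω | a ≤ cappedIncrementSum (fun s => X s ω) h δ m}
      ≤ exp (cappedMgfSlope * (m * h) * laplaceExponent d ν δ⁻¹ - (4 * δ)⁻¹ * a) := by
  have := hX.isProb
  have hXmeas := hX.meas
  have hmeas : Measurable fun ω => cappedIncrementSum (fun s => X s ω) h δ m := by
    unfold cappedIncrementSum; fun_prop
  have hbdd : ∀ ω,
      (4 * δ)⁻¹ * cappedIncrementSum (fun s => X s ω) h δ m ≤ (4 * δ)⁻¹ * (m * δ) :=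
    fun ω => mul_le_mul_of_nonneg_left ((Finset.sum_le_sum fun j _ => min_le_right _ δ).trans_eq
      (by simp)) (by positivity)
  calc _ ≤ exp (-(4 * δ)⁻¹ * a)
        * mgf (fun ω => cappedIncrementSum (fun s => X s ω) h δ m) P (4 * δ)⁻¹ :=
        measure_ge_le_exp_mul_mgf a (by positivity) (integrable_exp_of_le (by fun_prop) hbdd)
    _ ≤ exp (-(4 * δ)⁻¹ * a)
        * exp (cappedMgfSlope * (m * h) * laplaceExponent d ν δ⁻¹) :=
        mul_le_mul_of_nonneg_left (hX.mgf_cappedIncrementSum_le hδ hh m) (exp_pos _).le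
    _ = _ := by rw [← exp_add]; ring_nf

end IsSubordinator

/-- there is an absolute constant `C_a > 0`, not depending on the
subordinator, such that `P(N(t,δ) ≥ x) ≤ exp(2 C_a t / U(δ) - x/8)` for all
`t, δ, x > 0`. -/
theorem coverN_tail_bound :
    ∃ Ca : ℝ, 0 < Ca ∧
      ∀ (Ω : Type) (_ : MeasurableSpace Ω) (P : Measure Ω)
        (X : ℝ → Ω → ℝ) (d : ℝ) (ν : Measure ℝ),
        IsSubordinator P X d ν →
        ∀ t δ x : ℝ, 0 < t → 0 < δ → 0 < x →
          (P {ω | x ≤ (coverN X t δ ω : ℝ)}).toReal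
            ≤ Real.exp (2 * Ca * t / potU P X δ - x / 8) := by
  refine ⟨1, one_pos, fun Ω _ P X d ν hX t δ x ht hδ hx => ?_⟩
  have := hX.isProb
  set E : ℕ → Set Ω := fun m =>
    {ω | x * δ / 2 ≤ cappedIncrementSum (fun s => X s ω) (t / m) δ m}
  have hcover : {ω | x ≤ (coverN X t δ ω : ℝ)} ⊆ {ω | ∀ᶠ m in atTop, ω ∈ E m} := by
    intro ω (hω : x ≤ (coverN X t δ ω : ℝ))
    have hN : 0 < coverN X t δ ω := by exact_mod_cast hx.trans_le hω
    filter_upwards [eventually_coverN_mul_le_two_mul_cappedIncrementSum ht hδ (hX.mono ω)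
      (hX.rightCont ω) hN] with m hm
    show x * δ / 2 ≤ _
    linarith [mul_le_mul_of_nonneg_right hω hδ.le]
  have hE : ∀ᶠ m in atTop,
      P (E m) ≤ .ofReal (exp (cappedMgfSlope * t * laplaceExponent d ν δ⁻¹ - x / 8)) := by
    filter_upwards [eventually_gt_atTop 0] with m hm
    have := hX.measureReal_le_cappedIncrementSum_le hδ (by positivity : 0 < t / m) m (x * δ / 2)
    rw [mul_div_cancel₀ _ (Nat.cast_pos.2 hm).ne',
      show (4 * δ)⁻¹ * (x * δ / 2) = x / 8 by field_simp; ring] at this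
    exact (ENNReal.le_ofReal_iff_toReal_le (measure_ne_top _ _) (exp_pos _).le).2 this
  calc (P {ω | x ≤ (coverN X t δ ω : ℝ)}).toReal
      ≤ exp (cappedMgfSlope * t * laplaceExponent d ν δ⁻¹ - x / 8) :=
        ENNReal.toReal_le_of_le_ofReal (exp_pos _).le
          ((measure_mono hcover).trans (measure_setOf_eventually_mem_le hE))
    _ ≤ exp (2 * 1 * t / potU P X δ - x / 8) := by
        have := mul_le_mul_of_nonneg_right (hX.cappedMgfSlope_mul_laplaceExponent_le hδ) ht.le
        gcongr
        linarith [show 2 / potU P X δ * t = 2 * 1 * t / potU P X δ by ring]
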